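/- arXiv:2105.08010 — 5 statements merged into one kernel-verified Lean document; each statement's English description precedes it below -/
import Mathlib

section
/- In the Co(QE)_n setting, the square of the length of the Ricci tensor satisfies: s² = n a² + b₁₁² + b₂₂² + b₃₃² + b₄₄² + 2a(b₁₁ + b₂₂ + b₃₃ + b₄₄) + 2b₁₂² + 2b₁₃² + 2b₁₄² + 2b₂₃² + 2b₂₄² + 2b₃₄² + 2c₁(b₂₂ d₁(W₂,W₂) + b₃₃ d₁(W₃,W₃) + b₄₄ d₁(W₄,W₄) + 2b₂₃ d₁(W₂,W₃) + 2b₂₄ d₁(W₂,W₄) + 2b₃₄ d₁(W₃,W₄)) + 2c₂(b₂₂ d₂(W₂,W₂) + b₃₃ d₂(W₃,W₃) + b₄₄ d₂(W₄,W₄) + 2b₂₃ d₂(W₂,W₃) + 2b₂₄ d₂(W₂,W₄) + 2b₃₄ d₂(W₃,W₄)) + c₁² t₁² + c₂² t₂² + 2c₁c₂ Σ_{k=1}^{n} g(D₁ e_k, D₂ e_k), where (e_k) is any orthonormal basis of V. -/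
open RealInnerProductSpace

lemma aux_sum_bilinear {V : Type*} [NormedAddCommGroup V] [InnerProductSpace ℝ V]
    [FiniteDimensional ℝ V] {n : ℕ} (e : OrthonormalBasis (Fin n) ℝ V)
    (d : V →ₗ[ℝ] V →ₗ[ℝ] ℝ) (Y Z : V) :
    ∑ k, ⟪e k, Y⟫ * d (e k) Z = d Y Z := by
  conv_rhs => rw [← e.sum_repr' Y]
  rw [map_sum]
  simp [mul_comm]

lemma aux_sum_inner {V : Type*} [NormedAddCommGroup V] [InnerProductSpace ℝ V]
    [FiniteDimensional ℝ V] {n : ℕ} (e : OrthonormalBasis (Fin n) ℝ V) (Y Z : V) :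
    ∑ k, ⟪e k, Y⟫ * ⟪e k, Z⟫ = ⟪Y, Z⟫ := by
  have h := e.sum_inner_mul_inner Y Z
  calc ∑ k, ⟪e k, Y⟫ * ⟪e k, Z⟫ = ∑ k, ⟪Y, e k⟫ * ⟪e k, Z⟫ := by
        refine Finset.sum_congr rfl fun k _ => by rw [real_inner_comm]
    _ = ⟪Y, Z⟫ := h

/-- The square of the length of the Ricci tensor of a Co(QE)_n. -/
theorem coQE_length_ricci_squared
{V : Type*} [NormedAddCommGroup V] [InnerProductSpace ℝ V] [FiniteDimensional ℝ V]
    (n : ℕ) (hn : 2 < n) (hdim : Module.finrank ℝ V = n)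
    (a c₁ c₂ : ℝ) (b : Fin 4 → Fin 4 → ℝ) (hb : ∀ i j, b i j = b j i)
    (W : Fin 4 → V) (hW : Orthonormal ℝ W)
    (d₁ d₂ : V →ₗ[ℝ] V →ₗ[ℝ] ℝ)
    (hd₁symm : ∀ X Y, d₁ X Y = d₁ Y X) (hd₂symm : ∀ X Y, d₂ X Y = d₂ Y X)
    (hd₁tr : ∀ e : OrthonormalBasis (Fin n) ℝ V, ∑ k, d₁ (e k) (e k) = 0)
    (hd₂tr : ∀ e : OrthonormalBasis (Fin n) ℝ V, ∑ k, d₂ (e k) (e k) = 0)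
    (hd₁W : ∀ X : V, d₁ X (W 0) = 0) (hd₂W : ∀ X : V, d₂ X (W 0) = 0)
    (S : V → V → ℝ)
    (hS : ∀ X Y : V, S X Y = a * ⟪X, Y⟫
      + (∑ i : Fin 4, ∑ j : Fin 4, b i j * ⟪X, W i⟫ * ⟪Y, W j⟫)
      + c₁ * d₁ X Y + c₂ * d₂ X Y)
    (Q D₁ D₂ : V →ₗ[ℝ] V)
    (hQ : ∀ X Y : V, ⟪Q X, Y⟫ = S X Y)
    (hD₁ : ∀ X Y : V, ⟪D₁ X, Y⟫ = d₁ X Y)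
    (hD₂ : ∀ X Y : V, ⟪D₂ X, Y⟫ = d₂ X Y) :
    ∀ e : OrthonormalBasis (Fin n) ℝ V,
      ∑ k, S (Q (e k)) (e k) =
        n * a ^ 2 + (b 0 0) ^ 2 + (b 1 1) ^ 2 + (b 2 2) ^ 2 + (b 3 3) ^ 2
        + 2 * a * (b 0 0 + b 1 1 + b 2 2 + b 3 3)
        + 2 * (b 0 1) ^ 2 + 2 * (b 0 2) ^ 2 + 2 * (b 0 3) ^ 2
        + 2 * (b 1 2) ^ 2 + 2 * (b 1 3) ^ 2 + 2 * (b 2 3) ^ 2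
        + 2 * c₁ * (b 1 1 * d₁ (W 1) (W 1) + b 2 2 * d₁ (W 2) (W 2)
            + b 3 3 * d₁ (W 3) (W 3) + 2 * b 1 2 * d₁ (W 1) (W 2)
            + 2 * b 1 3 * d₁ (W 1) (W 3) + 2 * b 2 3 * d₁ (W 2) (W 3))
        + 2 * c₂ * (b 1 1 * d₂ (W 1) (W 1) + b 2 2 * d₂ (W 2) (W 2)
            + b 3 3 * d₂ (W 3) (W 3) + 2 * b 1 2 * d₂ (W 1) (W 2)
            + 2 * b 1 3 * d₂ (W 1) (W 3) + 2 * b 2 3 * d₂ (W 2) (W 3))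
        + c₁ ^ 2 * (∑ k, d₁ (D₁ (e k)) (e k))
        + c₂ ^ 2 * (∑ k, d₂ (D₂ (e k)) (e k))
        + 2 * c₁ * c₂ * (∑ k, ⟪D₁ (e k), D₂ (e k)⟫) := by
  have hip : ∀ i j : Fin 4, ⟪W i, W j⟫ = if i = j then (1:ℝ) else 0 :=
    fun i j => orthonormal_iff_ite.mp hW i j
  have hSsymm : ∀ X Y, S X Y = S Y X := by
    intro X Y
    rw [hS X Y, hS Y X]
    have hsum : (∑ i : Fin 4, ∑ j : Fin 4, b i j * ⟪X, W i⟫ * ⟪Y, W j⟫)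
        = ∑ i : Fin 4, ∑ j : Fin 4, b i j * ⟪Y, W i⟫ * ⟪X, W j⟫ := by
      rw [Finset.sum_comm]
      exact Finset.sum_congr rfl fun i _ => Finset.sum_congr rfl fun j _ => by
        rw [hb]; ring
    rw [hsum, real_inner_comm X Y, hd₁symm X Y, hd₂symm X Y]
  have hSW : ∀ i j : Fin 4, S (W i) (W j)
      = a * (if i = j then (1:ℝ) else 0) + b i j + c₁ * d₁ (W i) (W j)
        + c₂ * d₂ (W i) (W j) := by
    intro i j
    have h1 : (∑ p : Fin 4, ∑ q : Fin 4, b p q * ⟪W i, W p⟫ * ⟪W j, W q⟫) = b i j := by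
      simp only [hip, mul_ite, mul_one, mul_zero, ite_mul, zero_mul]
      simp
    rw [hS, hip i j, h1]
  intro e
  have hone : ∀ k, ⟪e k, e k⟫ = (1:ℝ) := fun k => by
    simpa using orthonormal_iff_ite.mp e.orthonormal k k
  have hdQ₁ : ∀ X : V, d₁ (Q X) X = S X (D₁ X) := fun X => by
    rw [hd₁symm, ← hD₁, real_inner_comm, hQ]
  have hdQ₂ : ∀ X : V, d₂ (Q X) X = S X (D₂ X) := fun X => by
    rw [hd₂symm, ← hD₂, real_inner_comm, hQ]
  have key : ∀ k, S (Q (e k)) (e k)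
      = a * S (e k) (e k)
        + (∑ i : Fin 4, ∑ j : Fin 4, b i j * S (e k) (W i) * ⟪e k, W j⟫)
        + c₁ * S (e k) (D₁ (e k)) + c₂ * S (e k) (D₂ (e k)) := by
    intro k
    rw [hS (Q (e k)) (e k)]
    simp only [hQ, hdQ₁, hdQ₂]
  rw [Finset.sum_congr rfl fun k _ => key k]
  rw [Finset.sum_add_distrib, Finset.sum_add_distrib, Finset.sum_add_distrib,
      ← Finset.mul_sum, ← Finset.mul_sum, ← Finset.mul_sum]
  -- trace of S
  have SA : ∑ k, S (e k) (e k) = n * a + (b 0 0 + b 1 1 + b 2 2 + b 3 3) := by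
    have h0 : ∀ k, S (e k) (e k) = a
        + (∑ i : Fin 4, ∑ j : Fin 4, b i j * ⟪e k, W i⟫ * ⟪e k, W j⟫)
        + c₁ * d₁ (e k) (e k) + c₂ * d₂ (e k) (e k) :=
      fun k => by rw [hS, hone, mul_one]
    rw [Finset.sum_congr rfl fun k _ => h0 k]
    rw [Finset.sum_add_distrib, Finset.sum_add_distrib, Finset.sum_add_distrib,
        ← Finset.mul_sum, ← Finset.mul_sum, hd₁tr e, hd₂tr e, mul_zero, mul_zero,
        add_zero, add_zero]
    have hbb : (∑ k, ∑ i : Fin 4, ∑ j : Fin 4, b i j * ⟪e k, W i⟫ * ⟪e k, W j⟫)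
        = b 0 0 + b 1 1 + b 2 2 + b 3 3 := by
      rw [Finset.sum_comm]
      have inner_swap : ∀ i : Fin 4,
          (∑ k, ∑ j : Fin 4, b i j * ⟪e k, W i⟫ * ⟪e k, W j⟫)
          = ∑ j : Fin 4, b i j * ⟪W i, W j⟫ := by
        intro i
        rw [Finset.sum_comm]
        refine Finset.sum_congr rfl fun j _ => ?_
        rw [← aux_sum_inner e (W i) (W j), Finset.mul_sum]
        exact Finset.sum_congr rfl fun k _ => by ring
      rw [Finset.sum_congr rfl fun i _ => inner_swap i]
      simp only [hip, mul_ite, mul_one, mul_zero]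
      simp [Fin.sum_univ_four]
    rw [hbb, Finset.sum_const, Finset.card_univ, Fintype.card_fin, nsmul_eq_mul]
  -- the b-block
  have SB : (∑ k, ∑ i : Fin 4, ∑ j : Fin 4, b i j * S (e k) (W i) * ⟪e k, W j⟫)
      = ∑ i : Fin 4, ∑ j : Fin 4, b i j * S (W i) (W j) := by
    rw [Finset.sum_comm]
    refine Finset.sum_congr rfl fun i _ => ?_
    rw [Finset.sum_comm]
    refine Finset.sum_congr rfl fun j _ => ?_
    have h2 : ∑ k, S (e k) (W i) * ⟪e k, W j⟫ = S (W i) (W j) := by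
      have h3 : ∀ k, S (e k) (W i) * ⟪e k, W j⟫ = ⟪e k, W j⟫ * ⟪e k, Q (W i)⟫ := by
        intro k
        rw [hSsymm (e k) (W i), ← hQ (W i) (e k), real_inner_comm (Q (W i)) (e k)]
        ring
      rw [Finset.sum_congr rfl fun k _ => h3 k, aux_sum_inner e (W j) (Q (W i)),
          real_inner_comm, hQ]
    rw [← h2, Finset.mul_sum]
    exact Finset.sum_congr rfl fun k _ => by ring
  -- the d₁ block
  have SC : (∑ k, S (e k) (D₁ (e k)))
      = (∑ i : Fin 4, ∑ j : Fin 4, b i j * d₁ (W i) (W j))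
        + c₁ * (∑ k, d₁ (D₁ (e k)) (e k)) + c₂ * (∑ k, ⟪D₁ (e k), D₂ (e k)⟫) := by
    have h0 : ∀ k, S (e k) (D₁ (e k)) = a * d₁ (e k) (e k)
        + (∑ i : Fin 4, ∑ j : Fin 4, b i j * ⟪e k, W i⟫ * d₁ (e k) (W j))
        + c₁ * d₁ (D₁ (e k)) (e k) + c₂ * ⟪D₁ (e k), D₂ (e k)⟫ := by
      intro k
      have eA : ⟪e k, D₁ (e k)⟫ = d₁ (e k) (e k) := by
        rw [← hD₁]; exact real_inner_comm _ _
      have eB : d₂ (e k) (D₁ (e k)) = ⟪D₁ (e k), D₂ (e k)⟫ := by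
        rw [← hD₂]; exact real_inner_comm _ _
      have eC : d₁ (e k) (D₁ (e k)) = d₁ (D₁ (e k)) (e k) := hd₁symm _ _
      rw [hS, eA, eC, eB]
      simp only [hD₁]
    rw [Finset.sum_congr rfl fun k _ => h0 k]
    rw [Finset.sum_add_distrib, Finset.sum_add_distrib, Finset.sum_add_distrib,
        ← Finset.mul_sum, ← Finset.mul_sum, ← Finset.mul_sum, hd₁tr e, mul_zero,
        zero_add]
    congr 2
    rw [Finset.sum_comm]
    refine Finset.sum_congr rfl fun i _ => ?_
    rw [Finset.sum_comm]
    refine Finset.sum_congr rfl fun j _ => ?_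
    rw [← aux_sum_bilinear e d₁ (W i) (W j), Finset.mul_sum]
    exact Finset.sum_congr rfl fun k _ => by ring
  -- the d₂ block
  have SD : (∑ k, S (e k) (D₂ (e k)))
      = (∑ i : Fin 4, ∑ j : Fin 4, b i j * d₂ (W i) (W j))
        + c₁ * (∑ k, ⟪D₁ (e k), D₂ (e k)⟫) + c₂ * (∑ k, d₂ (D₂ (e k)) (e k)) := by
    have h0 : ∀ k, S (e k) (D₂ (e k)) = a * d₂ (e k) (e k)
        + (∑ i : Fin 4, ∑ j : Fin 4, b i j * ⟪e k, W i⟫ * d₂ (e k) (W j))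
        + c₁ * ⟪D₁ (e k), D₂ (e k)⟫ + c₂ * d₂ (D₂ (e k)) (e k) := by
      intro k
      have eA : ⟪e k, D₂ (e k)⟫ = d₂ (e k) (e k) := by
        rw [← hD₂]; exact real_inner_comm _ _
      have eB : d₁ (e k) (D₂ (e k)) = ⟪D₁ (e k), D₂ (e k)⟫ := (hD₁ _ _).symm
      have eC : d₂ (e k) (D₂ (e k)) = d₂ (D₂ (e k)) (e k) := hd₂symm _ _
      rw [hS, eA, eC, eB]
      simp only [hD₂]
    rw [Finset.sum_congr rfl fun k _ => h0 k]
    rw [Finset.sum_add_distrib, Finset.sum_add_distrib, Finset.sum_add_distrib,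
        ← Finset.mul_sum, ← Finset.mul_sum, ← Finset.mul_sum, hd₂tr e, mul_zero,
        zero_add]
    congr 2
    rw [Finset.sum_comm]
    refine Finset.sum_congr rfl fun i _ => ?_
    rw [Finset.sum_comm]
    refine Finset.sum_congr rfl fun j _ => ?_
    rw [← aux_sum_bilinear e d₂ (W i) (W j), Finset.mul_sum]
    exact Finset.sum_congr rfl fun k _ => by ring
  rw [SA, SB, SC, SD]
  have z1 : ∀ X, d₁ (W 0) X = 0 := fun X => by rw [hd₁symm]; exact hd₁W X
  have z2 : ∀ X, d₂ (W 0) X = 0 := fun X => by rw [hd₂symm]; exact hd₂W X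
  simp only [hSW, Fin.sum_univ_four, z1, z2, hd₁W, hd₂W, hb 1 0, hb 2 0, hb 3 0,
    hb 2 1, hb 3 1, hb 3 2, hd₁symm (W 2) (W 1), hd₁symm (W 3) (W 1),
    hd₁symm (W 3) (W 2), hd₂symm (W 2) (W 1), hd₂symm (W 3) (W 1),
    hd₂symm (W 3) (W 2), mul_zero, zero_mul, add_zero, zero_add,
    Fin.reduceEq, reduceIte, if_true, mul_one]
  ring
end

section
/- A manifold of comprehensive quasi-constant curvature (n > 3) is a Co(QE)_n: with R as in the context (the comprehensive quasi-constant curvature form with scalars a₁, …, a₁₃), the Ricci contraction S(X, Y) := Σ_{k=1}^{n} R(e_k, X, Y, e_k) (over any orthonormal basis (e_k) of V) satisfies S = b₁·g + b₂·ω¹⊗ω¹ + b₃·ω²⊗ω² + b₄·ω³⊗ω³ + b₅·ω⁴⊗ω⁴ + b₆·(ω¹⊗ω² + ω²⊗ω¹) + b₇·(ω¹⊗ω⁴ + ω⁴⊗ω¹) + b₈·(ω²⊗ω³ + ω³⊗ω²) + b₉·(ω²⊗ω⁴ + ω⁴⊗ω²) + b₁₀·(ω³⊗ω¹ + ω¹⊗ω³)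 + b₁₁·(ω³⊗ω⁴ + ω⁴⊗ω³) + b₁₂·d₁ + b₁₃·d₂, where b₁ = a₁(n−1) + a₄ + a₅ + a₆ + a₇, b₂ = (n−2)a₄, b₃ = (n−2)a₅, b₄ = (n−2)a₆, b₅ = (n−2)a₇, b₆ = (n−2)a₈, b₇ = (n−2)a₉, b₈ = (n−2)a₁₀, b₉ = (n−2)a₁₁, b₁₀ = (n−2)a₁₂, b₁₁ = (n−2)a₁₃, b₁₂ = (n−2)a₂, b₁₃ = (n−2)a₃. -/
open RealInnerProductSpace

/-- The quadrilinear map Dg[h] built from a bilinear form h and the metric g. -/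
def Dg {V : Type*} [NormedAddCommGroup V] [InnerProductSpace ℝ V]
    (h : V → V → ℝ) (X Y Z U : V) : ℝ :=
  h X U * ⟪Y, Z⟫ - h Y U * ⟪X, Z⟫ + h Y Z * ⟪X, U⟫ - h X Z * ⟪Y, U⟫


section CoQEHelpers
set_option linter.unusedSectionVars false
variable {V : Type*} [NormedAddCommGroup V] [InnerProductSpace ℝ V] [FiniteDimensional ℝ V]
variable {n : ℕ}

private lemma coQE_sum_inner_self (e : OrthonormalBasis (Fin n) ℝ V) :
    ∑ k, (⟪e k, e k⟫ : ℝ) = n := by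
  have h1 : ∀ k, (⟪e k, e k⟫ : ℝ) = 1 := fun k => by
    have := e.orthonormal.1 k
    rw [real_inner_self_eq_norm_sq, this]; norm_num
  simp [h1]

private lemma coQE_parseval (e : OrthonormalBasis (Fin n) ℝ V) (x y : V) :
    ∑ k, (⟪e k, x⟫ : ℝ) * ⟪e k, y⟫ = ⟪x, y⟫ := by
  simpa [real_inner_comm] using e.sum_inner_mul_inner x y

private lemma coQE_key (e : OrthonormalBasis (Fin n) ℝ V)
    (h : V → V → ℝ) (X Y : V) (t : ℝ)
    (htr : ∑ k, h (e k) (e k) = t)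
    (hB : ∑ k, h X (e k) * ⟪e k, Y⟫ = h X Y)
    (hD : ∑ k, h (e k) Y * ⟪X, e k⟫ = h X Y) :
    ∑ k, Dg h (e k) X Y (e k) = t * ⟪X, Y⟫ + ((n : ℝ) - 2) * h X Y := by
  have hexp : ∀ k, Dg h (e k) X Y (e k) =
      (h (e k) (e k) * ⟪X, Y⟫ + h X Y * ⟪e k, e k⟫)
      - (h X (e k) * ⟪e k, Y⟫ + h (e k) Y * ⟪X, e k⟫) := by
    intro k; simp only [Dg]; ring
  rw [Finset.sum_congr rfl fun k _ => hexp k, Finset.sum_sub_distrib,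
    Finset.sum_add_distrib, Finset.sum_add_distrib, ← Finset.sum_mul,
    ← Finset.mul_sum, htr, hB, hD, coQE_sum_inner_self e]
  ring

private lemma coQE_keyDiag (e : OrthonormalBasis (Fin n) ℝ V) (X Y w : V)
    (hw : (⟪w, w⟫ : ℝ) = 1) :
    ∑ k, Dg (fun x y => ⟪x, w⟫ * ⟪y, w⟫) (e k) X Y (e k)
      = ⟪X, Y⟫ + ((n : ℝ) - 2) * (⟪X, w⟫ * ⟪Y, w⟫) := by
  have h := coQE_key e (fun x y => (⟪x, w⟫ : ℝ) * ⟪y, w⟫) X Y 1 ?_ ?_ ?_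
  · simpa using h
  · rw [coQE_parseval e w w, hw]
  · have h1 : ∀ k, ((⟪X, w⟫ : ℝ) * ⟪e k, w⟫) * ⟪e k, Y⟫
        = ⟪X, w⟫ * (⟪e k, w⟫ * ⟪e k, Y⟫) := fun k => by ring
    rw [Finset.sum_congr rfl fun k _ => h1 k, ← Finset.mul_sum, coQE_parseval]
    show _ = (⟪X, w⟫ : ℝ) * ⟪Y, w⟫
    rw [real_inner_comm w Y]
  · have h1 : ∀ k, ((⟪e k, w⟫ : ℝ) * ⟪Y, w⟫) * ⟪X, e k⟫
        = ⟪Y, w⟫ * (⟪e k, w⟫ * ⟪e k, X⟫) := fun k => by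
      rw [real_inner_comm X (e k)]; ring
    rw [Finset.sum_congr rfl fun k _ => h1 k, ← Finset.mul_sum, coQE_parseval]
    show _ = (⟪X, w⟫ : ℝ) * ⟪Y, w⟫
    rw [real_inner_comm w X]; ring

private lemma coQE_keyOff (e : OrthonormalBasis (Fin n) ℝ V) (X Y w w' : V)
    (hww' : (⟪w, w'⟫ : ℝ) = 0) :
    ∑ k, Dg (fun x y => ⟪x, w⟫ * ⟪y, w'⟫ + ⟪x, w'⟫ * ⟪y, w⟫) (e k) X Y (e k)
      = ((n : ℝ) - 2) * (⟪X, w⟫ * ⟪Y, w'⟫ + ⟪X, w'⟫ * ⟪Y, w⟫) := by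
  have h := coQE_key e (fun x y => (⟪x, w⟫ : ℝ) * ⟪y, w'⟫ + ⟪x, w'⟫ * ⟪y, w⟫) X Y 0 ?_ ?_ ?_
  · simpa using h
  · rw [Finset.sum_add_distrib, coQE_parseval, coQE_parseval]
    show (⟪w, w'⟫ : ℝ) + ⟪w', w⟫ = 0
    rw [hww', show (⟪w', w⟫ : ℝ) = 0 from by rw [real_inner_comm]; exact hww']; ring
  · have h1 : ∀ k, ((⟪X, w⟫ : ℝ) * ⟪e k, w'⟫ + ⟪X, w'⟫ * ⟪e k, w⟫) * ⟪e k, Y⟫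
        = ⟪X, w⟫ * (⟪e k, w'⟫ * ⟪e k, Y⟫) + ⟪X, w'⟫ * (⟪e k, w⟫ * ⟪e k, Y⟫) := fun k => by ring
    rw [Finset.sum_congr rfl fun k _ => h1 k, Finset.sum_add_distrib, ← Finset.mul_sum,
      ← Finset.mul_sum, coQE_parseval, coQE_parseval]
    show _ = (⟪X, w⟫ : ℝ) * ⟪Y, w'⟫ + ⟪X, w'⟫ * ⟪Y, w⟫
    rw [real_inner_comm w' Y, real_inner_comm w Y]
  · have h1 : ∀ k, ((⟪e k, w⟫ : ℝ) * ⟪Y, w'⟫ + ⟪e k, w'⟫ * ⟪Y, w⟫) * ⟪X, e k⟫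
        = ⟪Y, w'⟫ * (⟪e k, w⟫ * ⟪e k, X⟫) + ⟪Y, w⟫ * (⟪e k, w'⟫ * ⟪e k, X⟫) := fun k => by
      rw [real_inner_comm X (e k)]; ring
    rw [Finset.sum_congr rfl fun k _ => h1 k, Finset.sum_add_distrib, ← Finset.mul_sum,
      ← Finset.mul_sum, coQE_parseval, coQE_parseval]
    show _ = (⟪X, w⟫ : ℝ) * ⟪Y, w'⟫ + ⟪X, w'⟫ * ⟪Y, w⟫
    rw [real_inner_comm w X, real_inner_comm w' X]; ring

private lemma coQE_keyD (e : OrthonormalBasis (Fin n) ℝ V) (X Y : V)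
    (d : V →ₗ[ℝ] V →ₗ[ℝ] ℝ) (hsymm : ∀ x y, d x y = d y x)
    (htr : ∑ k, d (e k) (e k) = 0) :
    ∑ k, Dg (fun x y => d x y) (e k) X Y (e k) = ((n : ℝ) - 2) * d X Y := by
  have hrepr : ∀ x y : V, ∑ k, d x (e k) * ⟪e k, y⟫ = d x y := by
    intro x y
    have := congrArg (d x) (e.sum_repr' y)
    rw [map_sum] at this
    simpa [smul_eq_mul, mul_comm] using this
  have h := coQE_key e (fun x y => d x y) X Y 0 htr (hrepr X Y) ?_
  · simpa using h
  · have h1 : ∀ k, d (e k) Y * ⟪X, e k⟫ = d Y (e k) * ⟪e k, X⟫ := fun k => by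
      rw [hsymm (e k) Y, real_inner_comm X (e k)]
    rw [Finset.sum_congr rfl fun k _ => h1 k, hrepr Y X, hsymm Y X]

end CoQEHelpers

/-- A manifold of comprehensive quasi-constant curvature (n > 3) is a Co(QE)_n:
the Ricci contraction of R has comprehensive quasi-Einstein form. -/
theorem comprehensive_quasiConstantCurvature_is_coQE
    {V : Type*} [NormedAddCommGroup V] [InnerProductSpace ℝ V] [FiniteDimensional ℝ V]
    (n : ℕ) (hn : 3 < n) (hdim : Module.finrank ℝ V = n)
    (W : Fin 4 → V) (hW : Orthonormal ℝ W)
    (d₁ d₂ : V →ₗ[ℝ] V →ₗ[ℝ] ℝ)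
    (hd₁symm : ∀ X Y, d₁ X Y = d₁ Y X) (hd₂symm : ∀ X Y, d₂ X Y = d₂ Y X)
    (hd₁tr : ∀ e : OrthonormalBasis (Fin n) ℝ V, ∑ k, d₁ (e k) (e k) = 0)
    (hd₂tr : ∀ e : OrthonormalBasis (Fin n) ℝ V, ∑ k, d₂ (e k) (e k) = 0)
    (a1 a2 a3 a4 a5 a6 a7 a8 a9 a10 a11 a12 a13 : ℝ)
    (R : V → V → V → V → ℝ)
    (hR : ∀ X Y Z U : V, R X Y Z U =
      a1 * (⟪X, U⟫ * ⟪Y, Z⟫ - ⟪Y, U⟫ * ⟪X, Z⟫)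
      + a2 * Dg (fun x y => d₁ x y) X Y Z U
      + a3 * Dg (fun x y => d₂ x y) X Y Z U
      + a4 * Dg (fun x y => ⟪x, W 0⟫ * ⟪y, W 0⟫) X Y Z U
      + a5 * Dg (fun x y => ⟪x, W 1⟫ * ⟪y, W 1⟫) X Y Z U
      + a6 * Dg (fun x y => ⟪x, W 2⟫ * ⟪y, W 2⟫) X Y Z U
      + a7 * Dg (fun x y => ⟪x, W 3⟫ * ⟪y, W 3⟫) X Y Z U
      + a8 * Dg (fun x y => ⟪x, W 0⟫ * ⟪y, W 1⟫ + ⟪x, W 1⟫ * ⟪y, W 0⟫) X Y Z U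
      + a9 * Dg (fun x y => ⟪x, W 0⟫ * ⟪y, W 3⟫ + ⟪x, W 3⟫ * ⟪y, W 0⟫) X Y Z U
      + a10 * Dg (fun x y => ⟪x, W 1⟫ * ⟪y, W 2⟫ + ⟪x, W 2⟫ * ⟪y, W 1⟫) X Y Z U
      + a11 * Dg (fun x y => ⟪x, W 1⟫ * ⟪y, W 3⟫ + ⟪x, W 3⟫ * ⟪y, W 1⟫) X Y Z U
      + a12 * Dg (fun x y => ⟪x, W 2⟫ * ⟪y, W 0⟫ + ⟪x, W 0⟫ * ⟪y, W 2⟫) X Y Z U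
      + a13 * Dg (fun x y => ⟪x, W 2⟫ * ⟪y, W 3⟫ + ⟪x, W 3⟫ * ⟪y, W 2⟫) X Y Z U) :
    ∀ e : OrthonormalBasis (Fin n) ℝ V, ∀ X Y : V,
      ∑ k, R (e k) X Y (e k) =
        (a1 * ((n : ℝ) - 1) + a4 + a5 + a6 + a7) * ⟪X, Y⟫
        + ((n : ℝ) - 2) * a4 * (⟪X, W 0⟫ * ⟪Y, W 0⟫)
        + ((n : ℝ) - 2) * a5 * (⟪X, W 1⟫ * ⟪Y, W 1⟫)
        + ((n : ℝ) - 2) * a6 * (⟪X, W 2⟫ * ⟪Y, W 2⟫)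
        + ((n : ℝ) - 2) * a7 * (⟪X, W 3⟫ * ⟪Y, W 3⟫)
        + ((n : ℝ) - 2) * a8 * (⟪X, W 0⟫ * ⟪Y, W 1⟫ + ⟪X, W 1⟫ * ⟪Y, W 0⟫)
        + ((n : ℝ) - 2) * a9 * (⟪X, W 0⟫ * ⟪Y, W 3⟫ + ⟪X, W 3⟫ * ⟪Y, W 0⟫)
        + ((n : ℝ) - 2) * a10 * (⟪X, W 1⟫ * ⟪Y, W 2⟫ + ⟪X, W 2⟫ * ⟪Y, W 1⟫)
        + ((n : ℝ) - 2) * a11 * (⟪X, W 1⟫ * ⟪Y, W 3⟫ + ⟪X, W 3⟫ * ⟪Y, W 1⟫)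
        + ((n : ℝ) - 2) * a12 * (⟪X, W 2⟫ * ⟪Y, W 0⟫ + ⟪X, W 0⟫ * ⟪Y, W 2⟫)
        + ((n : ℝ) - 2) * a13 * (⟪X, W 2⟫ * ⟪Y, W 3⟫ + ⟪X, W 3⟫ * ⟪Y, W 2⟫)
        + ((n : ℝ) - 2) * a2 * d₁ X Y
        + ((n : ℝ) - 2) * a3 * d₂ X Y := by
  intro e X Y
  have hw1 : ∀ i, (⟪W i, W i⟫ : ℝ) = 1 := fun i => by
    have := hW.1 i
    rw [real_inner_self_eq_norm_sq, this]; norm_num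
  have hw0 : ∀ i j, i ≠ j → (⟪W i, W j⟫ : ℝ) = 0 := fun i j hij => hW.2 hij
  have ha1 : ∑ k, ((⟪e k, e k⟫ : ℝ) * ⟪X, Y⟫ - ⟪X, e k⟫ * ⟪e k, Y⟫)
      = ((n : ℝ) - 1) * ⟪X, Y⟫ := by
    have h1 : ∀ k, (⟪X, e k⟫ : ℝ) * ⟪e k, Y⟫ = ⟪e k, X⟫ * ⟪e k, Y⟫ := fun k => by
      rw [real_inner_comm X (e k)]
    rw [Finset.sum_sub_distrib, ← Finset.sum_mul, coQE_sum_inner_self e,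
      Finset.sum_congr rfl fun k _ => h1 k, coQE_parseval]
    ring
  simp only [hR, Finset.sum_add_distrib, ← Finset.mul_sum]
  rw [ha1, coQE_keyD e X Y d₁ hd₁symm (hd₁tr e), coQE_keyD e X Y d₂ hd₂symm (hd₂tr e),
    coQE_keyDiag e X Y (W 0) (hw1 0), coQE_keyDiag e X Y (W 1) (hw1 1),
    coQE_keyDiag e X Y (W 2) (hw1 2), coQE_keyDiag e X Y (W 3) (hw1 3),
    coQE_keyOff e X Y (W 0) (W 1) (hw0 0 1 (by decide)),
    coQE_keyOff e X Y (W 0) (W 3) (hw0 0 3 (by decide)),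
    coQE_keyOff e X Y (W 1) (W 2) (hw0 1 2 (by decide)),
    coQE_keyOff e X Y (W 1) (W 3) (hw0 1 3 (by decide)),
    coQE_keyOff e X Y (W 2) (W 0) (hw0 2 0 (by decide)),
    coQE_keyOff e X Y (W 2) (W 3) (hw0 2 3 (by decide))]
  ring
end

section
/- Suppose the nonzero symmetric bilinear form S on V satisfies, for all X, Y, Z, W ∈ V: S³(X,Z)S³(Y,W) = S(Y,Z)S(X,W) − a₀S(X,Z)S(Y,W) + a₁(S(X,Y)g(Z,W) + S(Z,W)g(X,Y)) + a₂(S²(X,Y)g(Z,W) + S²(Z,W)g(X,Y)) + a₃(S³(X,Y)g(Z,W) + S³(Z,W)g(X,Y)) + a₄(S²(X,Y)S(Z,W) + S²(Z,W)S(X,Y)) + a₅(g(Y,Z)g(X,W) − g(Y,W)g(X,Z)) + a₆(S³(X,Y)S(Z,W) + S³(Z,W)S(X,Y)) + a₇(S³(X,Y)S²(Z,W) + S³(Z,W)S²(X,Y)) + a₈d₁(X,W)g(Y,Z) + a₉d₂(X,W)g(Y,Z) + a₁₀S²(X,Z)S²(Y,W). Let U ∈ V be a vector with c₁ := S(U,U)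 ≠ 0 and set c₂ := g(U,U), ω¹(X) := g(X,U), ω²(X) := ω¹(QX), ω³(X) := ω¹(Q²X), ω⁴(X) := ω¹(Q³X). Then for all X, W ∈ V: S(X,W) = (−a₅c₂/c₁)g(X,W) + (a₅/c₁)ω¹(X)ω¹(W) + (a₀/c₁)ω²(X)ω²(W) + (−a₁₀/c₁)ω³(X)ω³(W) + (1/c₁)ω⁴(X)ω⁴(W) + (−a₁/c₁)(ω²(X)ω¹(W) + ω¹(X)ω²(W)) + (−a₂/c₁)(ω³(X)ω¹(W) + ω¹(X)ω³(W)) + (−a₃/c₁)(ω⁴(X)ω¹(W) + ω¹(X)ω⁴(W)) + (−a₄/c₁)(ω³(X)ω²(W) + ω²(X)ω³(W)) + (−a₆/c₁)(ω²(X)ω⁴(W) + ω⁴(X)ω²(W)) + (−a₇/c₁)(ω³(X)ω⁴(W) + ω⁴(X)ω³(W)) + (−a₈c₂/c₁)d₁(X,W) + (−a₉c₂/c₁)d₂(X,W); in particular S has the defining form of a comprehensive quasi-Einstein (Co(QE)_n) Ricci tensor. -/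
set_option maxHeartbeats 1000000

open RealInnerProductSpace

/-- Existence theorem: if the nonzero symmetric bilinear form S satisfies the
algebraic identity (*) and U is a direction with S(U,U) ≠ 0, then S has the
defining form of a comprehensive quasi-Einstein (Co(QE)_n) Ricci tensor. -/
theorem coQE_existence_from_identity
    {V : Type*} [NormedAddCommGroup V] [InnerProductSpace ℝ V] [FiniteDimensional ℝ V]
    (n : ℕ) (hdim : Module.finrank ℝ V = n)
    (S S2 S3 : V → V → ℝ) (hSne : S ≠ 0)
    (hSsymm : ∀ X Y : V, S X Y = S Y X)
    (Q : V →ₗ[ℝ] V)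
    (hQ : ∀ X Y : V, ⟪Q X, Y⟫ = S X Y)
    (hS2 : ∀ X Y : V, S2 X Y = ⟪Q (Q X), Y⟫)
    (hS3 : ∀ X Y : V, S3 X Y = ⟪Q (Q (Q X)), Y⟫)
    (d₁ d₂ : V →ₗ[ℝ] V →ₗ[ℝ] ℝ)
    (hd₁symm : ∀ X Y, d₁ X Y = d₁ Y X) (hd₂symm : ∀ X Y, d₂ X Y = d₂ Y X)
    (a0 a1 a2 a3 a4 a5 a6 a7 a8 a9 a10 : ℝ)
    (ha0 : a0 ≠ 0) (ha1 : a1 ≠ 0) (ha2 : a2 ≠ 0) (ha3 : a3 ≠ 0) (ha4 : a4 ≠ 0)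
    (ha5 : a5 ≠ 0) (ha6 : a6 ≠ 0) (ha7 : a7 ≠ 0) (ha8 : a8 ≠ 0) (ha9 : a9 ≠ 0)
    (ha10 : a10 ≠ 0)
    (hbig : ∀ X Y Z U : V,
      S3 X Z * S3 Y U = S Y Z * S X U - a0 * (S X Z * S Y U)
        + a1 * (S X Y * ⟪Z, U⟫ + S Z U * ⟪X, Y⟫)
        + a2 * (S2 X Y * ⟪Z, U⟫ + S2 Z U * ⟪X, Y⟫)
        + a3 * (S3 X Y * ⟪Z, U⟫ + S3 Z U * ⟪X, Y⟫)
        + a4 * (S2 X Y * S Z U + S2 Z U * S X Y)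
        + a5 * (⟪Y, Z⟫ * ⟪X, U⟫ - ⟪Y, U⟫ * ⟪X, Z⟫)
        + a6 * (S3 X Y * S Z U + S3 Z U * S X Y)
        + a7 * (S3 X Y * S2 Z U + S3 Z U * S2 X Y)
        + a8 * (d₁ X U * ⟪Y, Z⟫) + a9 * (d₂ X U * ⟪Y, Z⟫)
        + a10 * (S2 X Z * S2 Y U))
    (U : V) (hU : S U U ≠ 0) :
    ∀ X W : V, S X W =
      (-a5 * ⟪U, U⟫ / S U U) * ⟪X, W⟫
      + (a5 / S U U) * (⟪X, U⟫ * ⟪W, U⟫)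
      + (a0 / S U U) * (⟪Q X, U⟫ * ⟪Q W, U⟫)
      + (-a10 / S U U) * (⟪Q (Q X), U⟫ * ⟪Q (Q W), U⟫)
      + (1 / S U U) * (⟪Q (Q (Q X)), U⟫ * ⟪Q (Q (Q W)), U⟫)
      + (-a1 / S U U) * (⟪Q X, U⟫ * ⟪W, U⟫ + ⟪X, U⟫ * ⟪Q W, U⟫)
      + (-a2 / S U U) * (⟪Q (Q X), U⟫ * ⟪W, U⟫ + ⟪X, U⟫ * ⟪Q (Q W), U⟫)
      + (-a3 / S U U) * (⟪Q (Q (Q X)), U⟫ * ⟪W, U⟫ + ⟪X, U⟫ * ⟪Q (Q (Q W)), U⟫)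
      + (-a4 / S U U) * (⟪Q (Q X), U⟫ * ⟪Q W, U⟫ + ⟪Q X, U⟫ * ⟪Q (Q W), U⟫)
      + (-a6 / S U U) * (⟪Q X, U⟫ * ⟪Q (Q (Q W)), U⟫ + ⟪Q (Q (Q X)), U⟫ * ⟪Q W, U⟫)
      + (-a7 / S U U) * (⟪Q (Q X), U⟫ * ⟪Q (Q (Q W)), U⟫
          + ⟪Q (Q (Q X)), U⟫ * ⟪Q (Q W), U⟫)
      + (-a8 * ⟪U, U⟫ / S U U) * d₁ X W
      + (-a9 * ⟪U, U⟫ / S U U) * d₂ X W := by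
  intro X W
  have hS' : ∀ a b : V, S a b = ⟪Q a, b⟫ := fun a b => (hQ a b).symm
  have hQsa : ∀ a b : V, ⟪Q a, b⟫ = ⟪Q b, a⟫ := fun a b => by
    rw [hQ, hSsymm, ← hQ]
  have h2 : ∀ a b : V, ⟪Q (Q a), b⟫ = ⟪Q (Q b), a⟫ := fun a b => by
    rw [hQsa (Q a) b, real_inner_comm (Q a) (Q b), hQsa a (Q b)]
  have h3 : ∀ a b : V, ⟪Q (Q (Q a)), b⟫ = ⟪Q (Q (Q b)), a⟫ := fun a b => by
    rw [hQsa (Q (Q a)) b, real_inner_comm (Q (Q a)) (Q b), h2 a (Q b)]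
  have key := hbig X U U W
  simp only [hS', hS2, hS3] at key ⊢
  rw [h3 U W, hQsa U W, h2 U W, real_inner_comm W U] at key
  have hU' : ⟪Q U, U⟫ ≠ 0 := by rwa [hS'] at hU
  simp only [div_mul_eq_mul_div, ← add_div]
  rw [eq_div_iff hU']
  linear_combination -key
end

section
/- In a conformally flat Co(QE)_n (n > 3) with c₁ = 0 = c₂ and b₁₂ = b₁₃ = b₁₄ = b₂₃ = b₂₄ = b₃₄ = 0, if X ∈ V is a unit vector orthogonal to W₁, W₂, W₃, W₄, then the sectional curvatures of the planes spanned by X and one generator are given by R(X,W₁,W₁,X)/g(X,X) = ((a+b₁₁)(n−2) − b₂₂ − b₃₃ − b₄₄)/((n−1)(n−2)); R(X,W₂,W₂,X)/g(X,X) = ((a+b₂₂)(n−2) − b₁₁ − b₃₃ − b₄₄)/((n−1)(n−2)); R(X,W₃,W₃,X)/g(X,X) = ((a+b₃₃)(n−2) − b₁₁ − b₂₂ − b₄₄)/((n−1)(n−2)); and R(X,W₄,W₄,X)/g(X,X) = ((a+b₄₄)(n−2) − b₁₁ − b₂₂ − b₃₃)/((n−1)(n−2)). -/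
open RealInnerProductSpace

set_option maxHeartbeats 1000000 in
/-- In a conformally flat Co(QE)_n (n > 3) with c₁ = 0 = c₂ (and vanishing
off-diagonal scalars b_{ij}), the sectional curvatures of planes spanned by a
unit vector orthogonal to all four generators together with one generator. -/
theorem coQE_sectional_curvature_generator_planes
{V : Type*} [NormedAddCommGroup V] [InnerProductSpace ℝ V] [FiniteDimensional ℝ V]
    (n : ℕ) (hn : 2 < n) (hdim : Module.finrank ℝ V = n)
    (a c₁ c₂ : ℝ) (b : Fin 4 → Fin 4 → ℝ) (hb : ∀ i j, b i j = b j i)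
    (W : Fin 4 → V) (hW : Orthonormal ℝ W)
    (d₁ d₂ : V →ₗ[ℝ] V →ₗ[ℝ] ℝ)
    (hd₁symm : ∀ X Y, d₁ X Y = d₁ Y X) (hd₂symm : ∀ X Y, d₂ X Y = d₂ Y X)
    (hd₁tr : ∀ e : OrthonormalBasis (Fin n) ℝ V, ∑ k, d₁ (e k) (e k) = 0)
    (hd₂tr : ∀ e : OrthonormalBasis (Fin n) ℝ V, ∑ k, d₂ (e k) (e k) = 0)
    (hd₁W : ∀ X : V, d₁ X (W 0) = 0) (hd₂W : ∀ X : V, d₂ X (W 0) = 0)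
    (S : V → V → ℝ)
    (hS : ∀ X Y : V, S X Y = a * ⟪X, Y⟫
      + (∑ i : Fin 4, ∑ j : Fin 4, b i j * ⟪X, W i⟫ * ⟪Y, W j⟫)
      + c₁ * d₁ X Y + c₂ * d₂ X Y)
    (hn' : 3 < n) (hc₁ : c₁ = 0) (hc₂ : c₂ = 0)
    (hb01 : b 0 1 = 0) (hb02 : b 0 2 = 0) (hb03 : b 0 3 = 0)
    (hb12 : b 1 2 = 0) (hb13 : b 1 3 = 0) (hb23 : b 2 3 = 0)
    (R : V → V → V → V → ℝ)
    (hR : ∀ X Y Z U : V, R X Y Z U =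
      (1 / ((n : ℝ) - 2)) * (S X U * ⟪Y, Z⟫ - S Y U * ⟪X, Z⟫
        + ⟪X, U⟫ * S Y Z - ⟪Y, U⟫ * S X Z)
      - ((a * n + b 0 0 + b 1 1 + b 2 2 + b 3 3) / (((n : ℝ) - 1) * ((n : ℝ) - 2)))
        * (⟪X, U⟫ * ⟪Y, Z⟫ - ⟪Y, U⟫ * ⟪X, Z⟫)) :
    ∀ X : V, ‖X‖ = 1 → (∀ i : Fin 4, ⟪X, W i⟫ = 0) →
      R X (W 0) (W 0) X / ⟪X, X⟫ =
        ((a + b 0 0) * ((n : ℝ) - 2) - b 1 1 - b 2 2 - b 3 3)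
          / (((n : ℝ) - 1) * ((n : ℝ) - 2)) ∧
      R X (W 1) (W 1) X / ⟪X, X⟫ =
        ((a + b 1 1) * ((n : ℝ) - 2) - b 0 0 - b 2 2 - b 3 3)
          / (((n : ℝ) - 1) * ((n : ℝ) - 2)) ∧
      R X (W 2) (W 2) X / ⟪X, X⟫ =
        ((a + b 2 2) * ((n : ℝ) - 2) - b 0 0 - b 1 1 - b 3 3)
          / (((n : ℝ) - 1) * ((n : ℝ) - 2)) ∧
      R X (W 3) (W 3) X / ⟪X, X⟫ =
        ((a + b 3 3) * ((n : ℝ) - 2) - b 0 0 - b 1 1 - b 2 2)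
          / (((n : ℝ) - 1) * ((n : ℝ) - 2)) := by

  intro X hX hXW
  have hXX : ⟪X, X⟫ = (1 : ℝ) := by
    rw [real_inner_self_eq_norm_sq, hX]; norm_num
  have hWX : ∀ i, ⟪W i, X⟫ = 0 := fun i => by rw [real_inner_comm]; exact hXW i
  have hWW : ∀ i j, ⟪W i, W j⟫ = if i = j then (1:ℝ) else 0 :=
    orthonormal_iff_ite.mp hW
  have hb10 : b 1 0 = 0 := (hb 1 0).trans hb01
  have hb20 : b 2 0 = 0 := (hb 2 0).trans hb02
  have hb30 : b 3 0 = 0 := (hb 3 0).trans hb03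
  have hb21 : b 2 1 = 0 := (hb 2 1).trans hb12
  have hb31 : b 3 1 = 0 := (hb 3 1).trans hb13
  have hb32 : b 3 2 = 0 := (hb 3 2).trans hb23
  have hn2 : (n : ℝ) - 2 ≠ 0 := by
    have : (2 : ℝ) < n := by exact_mod_cast hn
    linarith
  have hn1 : (n : ℝ) - 1 ≠ 0 := by
    have : (2 : ℝ) < n := by exact_mod_cast hn
    linarith
  refine ⟨?_, ?_, ?_, ?_⟩ <;>
  · rw [hR, hS, hS, hS, hS, hXX]
    simp only [Fin.sum_univ_four, hXW, hWX, hWW, hc₁, hc₂, hb01, hb02, hb03,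
      hb12, hb13, hb23, hb10, hb20, hb30, hb21, hb31, hb32, Fin.isValue]
    simp only [Fin.reduceEq, reduceIte, Fin.isValue, mul_zero, zero_mul, mul_one, one_mul,
      add_zero, zero_add, sub_zero, zero_sub, neg_zero]
    field_simp
    ring
end

section
/- The Ricci tensor of a semi-pseudo Ricci symmetric manifold with nonzero Ricci tensor cannot be cyclic parallel (algebraic core): let V be a real vector space, S a nonzero symmetric bilinear form on V, and π a nonzero linear form on V; define the trilinear map A(X, Y, Z) := π(Y)S(X, Z) + π(Z)S(X, Y) (the semi-pseudo Ricci symmetric form of the covariant derivative of S in direction X). Then A does not satisfy the cyclic parallel identity, i.e. it is not the case that A(X, Y, Z) + A(Y, Z, X) + A(Z, X, Y) = 0 for all X, Y, Z ∈ V. Equivalently: if π(X)S(Y, Z) + π(Y)S(X, Z) + π(Z)S(X, Y) = 0 for all X, Y, Z ∈ V and S ≠ 0, then π = 0. -/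
/-- Algebraic core of: the Ricci tensor of a semi-pseudo Ricci symmetric
manifold (with nonzero Ricci tensor and nonzero 1-form π) cannot be cyclic
parallel.  With A(X,Y,Z) := π(Y)S(X,Z) + π(Z)S(X,Y), the cyclic sum
A(X,Y,Z) + A(Y,Z,X) + A(Z,X,Y) does not vanish identically. -/
theorem semiPseudoRicciSymmetric_not_cyclicParallel
    {V : Type*} [AddCommGroup V] [Module ℝ V]
    (S : V →ₗ[ℝ] V →ₗ[ℝ] ℝ) (hSsymm : ∀ X Y : V, S X Y = S Y X)
    (hS : S ≠ 0)
    (π : V →ₗ[ℝ] ℝ) (hπ : π ≠ 0) :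
    ¬ (∀ X Y Z : V,
        (π Y * S X Z + π Z * S X Y)
        + (π Z * S Y X + π X * S Y Z)
        + (π X * S Z Y + π Y * S Z X) = 0) := by
  intro h
  -- simplify using symmetry: π X * S Y Z + π Y * S X Z + π Z * S X Y = 0
  have h' : ∀ X Y Z : V, π X * S Y Z + π Y * S X Z + π Z * S X Y = 0 := by
    intro X Y Z
    have := h X Y Z
    rw [hSsymm Y X, hSsymm Z Y, hSsymm Z X] at this
    linarith
  obtain ⟨X0, hX0⟩ : ∃ X : V, π X ≠ 0 := by
    by_contra hc
    push_neg at hc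
    exact hπ (LinearMap.ext fun x => hc x)
  have hXX : S X0 X0 = 0 := by
    have := h' X0 X0 X0
    have : 3 * (π X0 * S X0 X0) = 0 := by linarith
    have := mul_eq_zero.mp (by linarith : π X0 * S X0 X0 = 0)
    tauto
  have hXZ : ∀ Z : V, S X0 Z = 0 := by
    intro Z
    have := h' X0 X0 Z
    rw [hXX] at this
    have h2 : π X0 * S X0 Z = 0 := by linarith
    rcases mul_eq_zero.mp h2 with hh | hh
    · exact absurd hh hX0
    · exact hh
  have hall : ∀ Y Z : V, S Y Z = 0 := by
    intro Y Z
    have := h' X0 Y Z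
    rw [hXZ Z, hXZ Y] at this
    have h2 : π X0 * S Y Z = 0 := by linarith
    rcases mul_eq_zero.mp h2 with hh | hh
    · exact absurd hh hX0
    · exact hh
  exact hS (LinearMap.ext fun Y => LinearMap.ext fun Z => hall Y Z)
end
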